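/- Let A be a finite-dimensional complex vector space carrying a unital associative ℂ-algebra structure and a coassociative counital ℂ-coalgebra structure, let Ω ∈ A be cocentral and non-degenerate, and let T : A → A be a linear map satisfying the pulling-through equation (1⊗x)·Δ(Ω) = (T(x)⊗1)·Δ(Ω) for all x ∈ A. If g and g' are linear functionals on A such that for all x ∈ A one has Δ(T(x)) = Σ_{(x)} g(x₍₂₎) · (T(x₍₃₎) ⊗ T(x₍₁₎)) and also Δ(T(x)) = Σ_{(x)} g'(x₍₂₎) · (T(x₍₃₎) ⊗ T(x₍₁₎)) (where Δ²(x) = Σ x₍₁₎⊗x₍₂₎⊗x₍₃₎), then g = g'. In other words, in a pulling-through algebra the group-like functional g is unique. -/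
import Mathlib


/-!
STATEMENT 9: Let `A` be a finite-dimensional complex vector space carrying a unital
associative `ℂ`-algebra structure and a coassociative counital `ℂ`-coalgebra structure,
let `Ω ∈ A` be cocentral and non-degenerate, and let `T : A → A` be linear with
`(1 ⊗ x) * Δ Ω = (T x ⊗ 1) * Δ Ω` for all `x`.  If `g, g'` are linear functionals on `A`
such that `Δ (T x) = Σ_{(x)} g x₍₂₎ • (T x₍₃₎ ⊗ T x₍₁₎)` and likewise for `g'`, then
`g = g'`: in a pulling-through algebra the group-like functional `g` is unique.
-/

open TensorProduct

noncomputable section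

/-- `Ω` is non-degenerate:
`{(id ⊗ f) (Δ Ω) : f ∈ A*} = A` and `{(f ⊗ id) (Δ Ω) : f ∈ A*} = A`. -/
def IsNonDegenerate {A : Type*} [Ring A] [Algebra ℂ A] [Coalgebra ℂ A] (Ω : A) : Prop :=
  (∀ y : A, ∃ f : Module.Dual ℂ A,
      (TensorProduct.rid ℂ A) (LinearMap.lTensor A f (Coalgebra.comul Ω)) = y) ∧
  (∀ y : A, ∃ f : Module.Dual ℂ A,
      (TensorProduct.lid ℂ A) (LinearMap.rTensor A f (Coalgebra.comul Ω)) = y)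

/-- The linear map `A ⊗ (A ⊗ A) → A ⊗ A`,
`x₍₁₎ ⊗ (x₍₂₎ ⊗ x₍₃₎) ↦ g x₍₂₎ • (T x₍₃₎ ⊗ T x₍₁₎)`.
Applied to `Δ² x = Σ x₍₁₎ ⊗ x₍₂₎ ⊗ x₍₃₎`, it yields `Σ_{(x)} g x₍₂₎ • (T x₍₃₎ ⊗ T x₍₁₎)`. -/
def twistMap {A : Type*} [Ring A] [Algebra ℂ A] [Coalgebra ℂ A]
    (g : Module.Dual ℂ A) (T : A →ₗ[ℂ] A) : A ⊗[ℂ] (A ⊗[ℂ] A) →ₗ[ℂ] A ⊗[ℂ] A :=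
  (TensorProduct.comm ℂ A A).toLinearMap ∘ₗ
    LinearMap.lTensor A (TensorProduct.lid ℂ A).toLinearMap ∘ₗ
      TensorProduct.map T (TensorProduct.map g T)

theorem pulling_through_grouplike_unique
    {A : Type*} [Ring A] [Algebra ℂ A] [FiniteDimensional ℂ A] [Coalgebra ℂ A]
    (Ω : A)
    -- `Ω` is cocentral:
    (hcoc : (TensorProduct.comm ℂ A A) (Coalgebra.comul Ω) = Coalgebra.comul Ω)
    (hΩ : IsNonDegenerate Ω) (T : A →ₗ[ℂ] A)
    -- the pulling-through equation:
    (hT : ∀ x : A,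
      ((1 : A) ⊗ₜ[ℂ] x) * Coalgebra.comul Ω = (T x ⊗ₜ[ℂ] (1 : A)) * Coalgebra.comul Ω)
    (g g' : Module.Dual ℂ A)
    -- `Δ (T x) = Σ_{(x)} g x₍₂₎ • (T x₍₃₎ ⊗ T x₍₁₎)`, where
    -- `Δ² x = (id ⊗ Δ) (Δ x) = Σ x₍₁₎ ⊗ (x₍₂₎ ⊗ x₍₃₎)`:
    (hg : ∀ x : A, Coalgebra.comul (T x)
      = twistMap g T (LinearMap.lTensor A Coalgebra.comul (Coalgebra.comul x)))
    (hg' : ∀ x : A, Coalgebra.comul (T x)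
      = twistMap g' T (LinearMap.lTensor A Coalgebra.comul (Coalgebra.comul x))) :
    g = g' := by
  classical
  -- Step 1: T is injective
  have hzero : ∀ x : A, T x = 0 → x = 0 := by
    intro x hx
    have h1 : ((1 : A) ⊗ₜ[ℂ] x) * Coalgebra.comul Ω = 0 := by
      rw [hT x, hx, TensorProduct.zero_tmul, zero_mul]
    obtain ⟨f, hf⟩ := hΩ.2 1
    have key : ∀ w : A ⊗[ℂ] A,
        (TensorProduct.lid ℂ A) (LinearMap.rTensor A f (((1 : A) ⊗ₜ[ℂ] x) * w))
          = x * (TensorProduct.lid ℂ A) (LinearMap.rTensor A f w) := by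
      intro w
      induction w using TensorProduct.induction_on with
      | zero => simp
      | tmul a b =>
          simp [Algebra.TensorProduct.tmul_mul_tmul, mul_smul_comm]
      | add u v hu hv => simp [mul_add, hu, hv]
    have := key (Coalgebra.comul Ω)
    rw [h1, hf, mul_one] at this
    simp at this
    exact this.symm
  have hinj : Function.Injective T := by
    intro a b hab
    have : T (a - b) = 0 := by rw [map_sub, hab, sub_self]
    exact sub_eq_zero.mp (hzero _ this)
  -- Step 2: a functional μ with μ ∘ T = counit
  obtain ⟨μ, hμ⟩ := LinearMap.dualMap_surjective_of_injective hinj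
    (Coalgebra.counit (R := ℂ) (A := A))
  have hμ' : ∀ y : A, μ (T y) = Coalgebra.counit y := fun y => LinearMap.congr_fun hμ y
  -- Step 3: the evaluation functional
  set Φ : A ⊗[ℂ] A →ₗ[ℂ] ℂ :=
    (TensorProduct.lid ℂ ℂ).toLinearMap ∘ₗ TensorProduct.map μ μ with hΦdef
  have lem1 : ∀ (k : Module.Dual ℂ A) (w : A ⊗[ℂ] (A ⊗[ℂ] A)),
      Φ (twistMap k T w)
        = ((TensorProduct.lid ℂ ℂ).toLinearMap ∘ₗ TensorProduct.map Coalgebra.counit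
            ((TensorProduct.lid ℂ ℂ).toLinearMap ∘ₗ
              TensorProduct.map k Coalgebra.counit)) w := by
    intro k w
    induction w using TensorProduct.induction_on with
    | zero => simp
    | tmul a w' =>
        induction w' using TensorProduct.induction_on with
        | zero => simp [twistMap]
        | tmul b c =>
            simp [hΦdef, twistMap, hμ', smul_eq_mul]
            ring
        | add u v hu hv =>
            rw [TensorProduct.tmul_add]
            simp only [map_add] at hu hv ⊢
            rw [hu, hv]
    | add u v hu hv => simp only [map_add, hu, hv]
  -- Step 4: evaluate on Δ² x to recover k x
  have lem2 : ∀ (k : Module.Dual ℂ A) (x : A),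
      ((TensorProduct.lid ℂ ℂ).toLinearMap ∘ₗ TensorProduct.map Coalgebra.counit
            ((TensorProduct.lid ℂ ℂ).toLinearMap ∘ₗ
              TensorProduct.map k Coalgebra.counit))
        (LinearMap.lTensor A Coalgebra.comul (Coalgebra.comul x)) = k x := by
    intro k x
    -- first collapse the inner comul:
    have inner : ∀ b : A,
        ((TensorProduct.lid ℂ ℂ).toLinearMap ∘ₗ
          TensorProduct.map k Coalgebra.counit) (Coalgebra.comul b) = k b := by
      intro b
      have h1 : TensorProduct.map k (Coalgebra.counit (R := ℂ) (A := A))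
          = TensorProduct.map k LinearMap.id ∘ₗ
              LinearMap.lTensor A Coalgebra.counit :=
        TensorProduct.ext' (fun a b => by simp)
      rw [LinearMap.comp_apply, h1, LinearMap.comp_apply,
        Coalgebra.lTensor_counit_comul]
      simp
    have hsplit : ∀ w : A ⊗[ℂ] A,
        ((TensorProduct.lid ℂ ℂ).toLinearMap ∘ₗ TensorProduct.map Coalgebra.counit
            ((TensorProduct.lid ℂ ℂ).toLinearMap ∘ₗ
              TensorProduct.map k Coalgebra.counit))
          (LinearMap.lTensor A Coalgebra.comul w)
        = ((TensorProduct.lid ℂ ℂ).toLinearMap ∘ₗ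
            TensorProduct.map Coalgebra.counit k) w := by
      intro w
      induction w using TensorProduct.induction_on with
      | zero => simp
      | tmul a b => simp [inner b]
      | add u v hu hv => simp only [map_add, hu, hv]
    rw [hsplit (Coalgebra.comul x)]
    have h2 : TensorProduct.map (Coalgebra.counit (R := ℂ) (A := A)) k
        = TensorProduct.map LinearMap.id k ∘ₗ
            LinearMap.rTensor A Coalgebra.counit :=
      TensorProduct.ext' (fun a b => by simp)
    rw [LinearMap.comp_apply, h2, LinearMap.comp_apply,
      Coalgebra.rTensor_counit_comul]
    simp
  -- conclude
  ext x
  have hx : Φ (twistMap g T (LinearMap.lTensor A Coalgebra.comul (Coalgebra.comul x)))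
      = Φ (twistMap g' T (LinearMap.lTensor A Coalgebra.comul (Coalgebra.comul x))) := by
    rw [← hg x, ← hg' x]
  rw [lem1 g, lem1 g', lem2 g x, lem2 g' x] at hx
  exact hx


end
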